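/- Double robustness decomposition: for binary G with q(x) = Pr(G=1|X=x) in (0,1), candidate functions q̂, m̂ with q̂ bounded away from 0, and m(x) = E[Ỹ | G=1, X=x], the expected estimation error satisfies E[ (G/q̂(X)) (Ỹ - m̂(X)) + m̂(X) - ( (G/q(X))(Ỹ - m(X)) + m(X) ) ] = E[ (q(X)/q̂(X) - 1)(m(X) - m̂(X)) ]; in particular it vanishes if either q̂ = q or m̂ = m. -/

import Mathlib

/-!
Since `X` takes finitely many values, splitting integrals over the fibres of `X` gives
`E[c(X) f] = E[c(X) E[f | X]]` for every weight `c`. For `f = 1_{G} Ỹ` and `f = 1_{G}` the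
fibrewise conditional means are `q m` and `q`, so the difference of the two AIPW scores has the
same integral as a function of `X` alone, in which the `1 / q` terms cancel identically
(`q m / q = m q / q` holds even at `q = 0`), leaving `(q / q̂ - 1)(m - m̂)`.
-/

open MeasureTheory

/-- Conditional expectation of `f` given the event `A`. -/
noncomputable def cexp {Ω : Type*} [MeasurableSpace Ω] (μ : Measure Ω) (f : Ω → ℝ)
    (A : Set Ω) : ℝ :=
  (∫ ω in A, f ω ∂μ) / (μ A).toReal

/-- `q(x) = Pr(G = 1 | X = x)`. -/
noncomputable def qx {Ω 𝒳 : Type*} [MeasurableSpace Ω] (μ : Measure Ω)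
    (G : Ω → Bool) (X : Ω → 𝒳) (x : 𝒳) : ℝ :=
  (μ {ω | G ω = true ∧ X ω = x}).toReal / (μ {ω | X ω = x}).toReal

/-- `m(x) = E[Ỹ | G = 1, X = x]`. -/
noncomputable def mx {Ω 𝒳 : Type*} [MeasurableSpace Ω] (μ : Measure Ω)
    (Y : Ω → ℝ) (G : Ω → Bool) (X : Ω → 𝒳) (x : 𝒳) : ℝ :=
  cexp μ Y {ω | G ω = true ∧ X ω = x}

theorem exists_norm_comp_le_of_finite_range {Ω 𝒳 β : Type*} [Norm β] {X : Ω → 𝒳}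
    (hXfin : (Set.range X).Finite) (c : 𝒳 → β) : ∃ C, ∀ ω, ‖c (X ω)‖ ≤ C :=
  have := hXfin.to_subtype
  let ⟨C, hC⟩ := Finite.bddAbove_range fun x : Set.range X => ‖c x‖
  ⟨C, fun ω => hC ⟨⟨X ω, ω, rfl⟩, rfl⟩⟩

section FiniteRange

variable {Ω 𝒳 : Type*} [MeasurableSpace Ω] [MeasurableSpace 𝒳] [MeasurableSingletonClass 𝒳]
  {μ : Measure Ω} {X : Ω → 𝒳}

theorem measurable_comp_of_finite_range {β : Type*} [MeasurableSpace β] (hX : Measurable X)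
    (hXfin : (Set.range X).Finite) (c : 𝒳 → β) : Measurable fun ω => c (X ω) :=
  have := hXfin.to_subtype
  (measurable_of_finite fun x : Set.range X => c x).comp (hX.subtype_mk (h := Set.mem_range_self))

theorem integrable_comp_of_finite_range [IsFiniteMeasure μ] (hX : Measurable X)
    (hXfin : (Set.range X).Finite) (c : 𝒳 → ℝ) : Integrable (fun ω => c (X ω)) μ :=
  let ⟨C, hC⟩ := exists_norm_comp_le_of_finite_range hXfin c
  .of_bound (measurable_comp_of_finite_range hX hXfin c).aestronglyMeasurable C (ae_of_all _ hC)

theorem MeasureTheory.Integrable.comp_mul_of_finite_range {f : Ω → ℝ} (hf : Integrable f μ)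
    (hX : Measurable X) (hXfin : (Set.range X).Finite) (c : 𝒳 → ℝ) :
    Integrable (fun ω => c (X ω) * f ω) μ :=
  let ⟨_, hC⟩ := exists_norm_comp_le_of_finite_range hXfin c
  hf.bdd_mul (measurable_comp_of_finite_range hX hXfin c).aestronglyMeasurable (ae_of_all _ hC)

theorem integral_eq_sum_setIntegral_fiber {E : Type*} [NormedAddCommGroup E] [NormedSpace ℝ E]
    {g : Ω → E} (hX : Measurable X) (hXfin : (Set.range X).Finite) (hg : Integrable g μ) :
    ∫ ω, g ω ∂μ = ∑ x ∈ hXfin.toFinset, ∫ ω in {ω | X ω = x}, g ω ∂μ := by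
  have hcover : ⋃ x ∈ hXfin.toFinset, {ω | X ω = x} = Set.univ :=
    Set.eq_univ_of_forall fun ω => Set.mem_biUnion (hXfin.mem_toFinset.mpr ⟨ω, rfl⟩) rfl
  have hdisj : (hXfin.toFinset : Set 𝒳).Pairwise (Function.onFun Disjoint fun x => {ω | X ω = x}) :=
    fun x _ y _ hxy => Set.disjoint_left.mpr fun ω hx hy => hxy (hx.symm.trans hy)
  rw [← setIntegral_univ, ← hcover]
  exact integral_biUnion_finset _ (fun x _ => hX (measurableSet_singleton x)) hdisj
    fun x _ => hg.integrableOn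

theorem setIntegral_fiber_comp_mul (hX : Measurable X) (c : 𝒳 → ℝ) (f : Ω → ℝ) (x : 𝒳) :
    ∫ ω in {ω | X ω = x}, c (X ω) * f ω ∂μ = c x * ∫ ω in {ω | X ω = x}, f ω ∂μ := by
  rw [← integral_const_mul]
  exact setIntegral_congr_fun (hX (measurableSet_singleton x)) fun ω (hω : X ω = x) => by rw [hω]

theorem setIntegral_fiber_comp (hX : Measurable X) (c : 𝒳 → ℝ) (x : 𝒳) :
    ∫ ω in {ω | X ω = x}, c (X ω) ∂μ = c x * (μ {ω | X ω = x}).toReal := by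
  simpa [measureReal_def] using setIntegral_fiber_comp_mul (μ := μ) hX c (fun _ => 1) x

end FiniteRange

section ConditionalExpectation

variable {Ω : Type*} [MeasurableSpace Ω] {μ : Measure Ω}

theorem cexp_mul_toReal [IsFiniteMeasure μ] (f : Ω → ℝ) (A : Set Ω) :
    cexp μ f A * (μ A).toReal = ∫ ω in A, f ω ∂μ := by
  by_cases hA : μ A = 0
  · simp [hA, Measure.restrict_eq_zero.mpr hA]
  · exact div_mul_cancel₀ _ (ENNReal.toReal_ne_zero.mpr ⟨hA, measure_ne_top μ A⟩)

theorem cexp_indicator [IsFiniteMeasure μ] {A : Set Ω} (hA : MeasurableSet A) (f : Ω → ℝ)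
    (B : Set Ω) :
    cexp μ (A.indicator f) B = (μ (A ∩ B)).toReal / (μ B).toReal * cexp μ f (A ∩ B) := by
  rw [cexp, setIntegral_indicator hA, Set.inter_comm, ← cexp_mul_toReal]
  ring

theorem cexp_indicator_one {A : Set Ω} (hA : MeasurableSet A) (B : Set Ω) :
    cexp μ (A.indicator 1) B = (μ (A ∩ B)).toReal / (μ B).toReal := by
  rw [cexp, setIntegral_indicator hA, Pi.one_def, setIntegral_const, smul_eq_mul, mul_one,
    measureReal_def, Set.inter_comm]

theorem integral_comp_mul_eq_integral_comp_mul_cexp {𝒳 : Type*} [MeasurableSpace 𝒳]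
    [MeasurableSingletonClass 𝒳] [IsFiniteMeasure μ] {X : Ω → 𝒳} {f : Ω → ℝ}
    (hX : Measurable X) (hXfin : (Set.range X).Finite) (c : 𝒳 → ℝ) (hf : Integrable f μ) :
    ∫ ω, c (X ω) * f ω ∂μ = ∫ ω, c (X ω) * cexp μ f {ω' | X ω' = X ω} ∂μ := by
  let d : 𝒳 → ℝ := fun x => c x * cexp μ f {ω' | X ω' = x}
  rw [integral_eq_sum_setIntegral_fiber hX hXfin (hf.comp_mul_of_finite_range hX hXfin c),
    integral_eq_sum_setIntegral_fiber hX hXfin (integrable_comp_of_finite_range hX hXfin d)]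
  refine Finset.sum_congr rfl fun x _ => ?_
  rw [setIntegral_fiber_comp_mul hX, setIntegral_fiber_comp hX, mul_assoc, cexp_mul_toReal]

end ConditionalExpectation

section DoubleRobustness

variable {Ω 𝒳 : Type*} [MeasurableSpace Ω] {μ : Measure Ω} {G : Ω → Bool} {X : Ω → 𝒳}

noncomputable def aipwScore (G : Ω → Bool) (X : Ω → 𝒳) (Y : Ω → ℝ) (q m : 𝒳 → ℝ) (ω : Ω) : ℝ :=
  ((if G ω then (1:ℝ) else 0) / q (X ω)) * (Y ω - m (X ω)) + m (X ω)

variable [MeasurableSpace 𝒳] [MeasurableSingletonClass 𝒳] [IsFiniteMeasure μ]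

theorem integral_comp_mul_indicator_one_eq_qx (hG : Measurable G) (hX : Measurable X)
    (hXfin : (Set.range X).Finite) (c : 𝒳 → ℝ) :
    ∫ ω, c (X ω) * {ω | G ω = true}.indicator 1 ω ∂μ = ∫ ω, c (X ω) * qx μ G X (X ω) ∂μ := by
  have hA : MeasurableSet {ω | G ω = true} := hG (measurableSet_singleton true)
  have h1A : Integrable ({ω | G ω = true}.indicator (1 : Ω → ℝ)) μ :=
    (integrable_const 1).indicator hA
  rw [integral_comp_mul_eq_integral_comp_mul_cexp hX hXfin c h1A]
  simp only [cexp_indicator_one hA]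
  rfl

theorem integral_comp_mul_indicator_eq_qx_mul_mx (hG : Measurable G) (hX : Measurable X)
    (hXfin : (Set.range X).Finite) {Y : Ω → ℝ} (hY : Integrable Y μ) (c : 𝒳 → ℝ) :
    ∫ ω, c (X ω) * {ω | G ω = true}.indicator Y ω ∂μ
      = ∫ ω, c (X ω) * (qx μ G X (X ω) * mx μ Y G X (X ω)) ∂μ := by
  have hA : MeasurableSet {ω | G ω = true} := hG (measurableSet_singleton true)
  rw [integral_comp_mul_eq_integral_comp_mul_cexp hX hXfin c (hY.indicator hA)]
  simp only [cexp_indicator hA]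
  rfl

theorem integral_aipwScore_sub_aipwScore {Y : Ω → ℝ} (hG : Measurable G) (hX : Measurable X)
    (hXfin : (Set.range X).Finite) (hY : Integrable Y μ) (qhat mhat : 𝒳 → ℝ) :
    ∫ ω, aipwScore G X Y qhat mhat ω - aipwScore G X Y (qx μ G X) (mx μ Y G X) ω ∂μ
      = ∫ ω, (qx μ G X (X ω) / qhat (X ω) - 1) * (mx μ Y G X (X ω) - mhat (X ω)) ∂μ := by
  set A := {ω | G ω = true}
  have hA : MeasurableSet A := hG (measurableSet_singleton true)
  set q := qx μ G X
  set m := mx μ Y G X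
  set a : 𝒳 → ℝ := fun x => 1 / qhat x - 1 / q x
  set b : 𝒳 → ℝ := fun x => m x / q x - mhat x / qhat x
  set d : 𝒳 → ℝ := fun x => mhat x - m x
  have haY := (hY.indicator hA).comp_mul_of_finite_range hX hXfin a
  have hb1 : Integrable (fun ω => b (X ω) * A.indicator 1 ω) μ :=
    ((integrable_const 1).indicator hA).comp_mul_of_finite_range hX hXfin b
  have hd := integrable_comp_of_finite_range (μ := μ) hX hXfin d
  have haqm := integrable_comp_of_finite_range (μ := μ) hX hXfin fun x => a x * (q x * m x)
  have hbq := integrable_comp_of_finite_range (μ := μ) hX hXfin fun x => b x * q x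
  calc _ = ∫ ω, a (X ω) * A.indicator Y ω + b (X ω) * A.indicator 1 ω + d (X ω) ∂μ := by
        refine integral_congr_ae (ae_of_all _ fun ω => ?_)
        simp only [aipwScore, Set.indicator_apply, Set.mem_ofPred_eq, Pi.one_apply, A, a, b, d]
        split_ifs <;> ring
    _ = ∫ ω, a (X ω) * A.indicator Y ω ∂μ + ∫ ω, b (X ω) * A.indicator 1 ω ∂μ
          + ∫ ω, d (X ω) ∂μ := by
        rw [integral_add (haY.add hb1 : Integrable (fun ω => _ + _) μ) hd, integral_add haY hb1]
    _ = ∫ ω, a (X ω) * (q (X ω) * m (X ω)) ∂μ + ∫ ω, b (X ω) * q (X ω) ∂μ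
          + ∫ ω, d (X ω) ∂μ := by
        rw [integral_comp_mul_indicator_eq_qx_mul_mx hG hX hXfin hY,
          integral_comp_mul_indicator_one_eq_qx hG hX hXfin]
    _ = ∫ ω, a (X ω) * (q (X ω) * m (X ω)) + b (X ω) * q (X ω) + d (X ω) ∂μ := by
        rw [integral_add (haqm.add hbq : Integrable (fun ω => _ + _) μ) hd, integral_add haqm hbq]
    _ = _ := by
        refine integral_congr_ae (ae_of_all _ fun ω => ?_)
        simp only [a, b, d]
        ring

end DoubleRobustness

theorem double_robustness_decomposition_general
    {Ω 𝒳 : Type*} [MeasurableSpace Ω] [MeasurableSpace 𝒳] [MeasurableSingletonClass 𝒳]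
    (μ : Measure Ω) [IsProbabilityMeasure μ]
    (Y : Ω → ℝ) (G : Ω → Bool) (X : Ω → 𝒳)
    (hG : Measurable G) (hX : Measurable X)
    (hXfin : (Set.range X).Finite)
    (hYint : Integrable Y μ)
    (ε : ℝ) (hε : 0 < ε)
    (qhat mhat : 𝒳 → ℝ)
    (hqhat : ∀ x, ε < qhat x ∧ qhat x < 1) :
    (∫ ω,
        ((if G ω then (1:ℝ) else 0) / qhat (X ω)) * (Y ω - mhat (X ω)) + mhat (X ω)
          - (((if G ω then (1:ℝ) else 0) / qx μ G X (X ω)) * (Y ω - mx μ Y G X (X ω))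
              + mx μ Y G X (X ω)) ∂μ)
      = ∫ ω, (qx μ G X (X ω) / qhat (X ω) - 1) * (mx μ Y G X (X ω) - mhat (X ω)) ∂μ
    ∧ (((∀ x, qhat x = qx μ G X x) ∨ (∀ x, mhat x = mx μ Y G X x)) →
        (∫ ω,
          ((if G ω then (1:ℝ) else 0) / qhat (X ω)) * (Y ω - mhat (X ω)) + mhat (X ω)
            - (((if G ω then (1:ℝ) else 0) / qx μ G X (X ω)) * (Y ω - mx μ Y G X (X ω))
                + mx μ Y G X (X ω)) ∂μ) = 0) := by
  have hdecomp := integral_aipwScore_sub_aipwScore (μ := μ) hG hX hXfin hYint qhat mhat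
  refine ⟨hdecomp, fun hcorrect => hdecomp.trans (integral_eq_zero_of_ae (ae_of_all _ fun ω => ?_))⟩
  dsimp only [Pi.zero_apply]
  rcases hcorrect with hq | hm
  · rw [← hq, div_self (hε.trans (hqhat _).1).ne', sub_self, zero_mul]
  · rw [hm, sub_self, mul_zero]

/-- Double robustness decomposition:
`E[(G/q̂(X))(Ỹ - m̂(X)) + m̂(X) - ((G/q(X))(Ỹ - m(X)) + m(X))]
  = E[(q(X)/q̂(X) - 1)(m(X) - m̂(X))]`,
and in particular it vanishes if either `q̂ = q` or `m̂ = m`. -/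
theorem double_robustness_decomposition
    {Ω 𝒳 : Type*} [MeasurableSpace Ω] [MeasurableSpace 𝒳] [MeasurableSingletonClass 𝒳]
    (μ : Measure Ω) [IsProbabilityMeasure μ]
    (Y : Ω → ℝ) (G : Ω → Bool) (X : Ω → 𝒳)
    (hG : Measurable G) (hX : Measurable X)
    (hXfin : (Set.range X).Finite)
    (hYint : Integrable Y μ)
    -- q(x) ∈ (0,1) on the support of X
    (hq : ∀ x, 0 < μ {ω | X ω = x} → 0 < qx μ G X x ∧ qx μ G X x < 1)
    (ε : ℝ) (hε : 0 < ε)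
    (qhat mhat : 𝒳 → ℝ)
    (hqhat : ∀ x, ε < qhat x ∧ qhat x < 1)
    (hmhat : ∃ C, ∀ x, |mhat x| ≤ C) :
    (∫ ω,
        ((if G ω then (1:ℝ) else 0) / qhat (X ω)) * (Y ω - mhat (X ω)) + mhat (X ω)
          - (((if G ω then (1:ℝ) else 0) / qx μ G X (X ω)) * (Y ω - mx μ Y G X (X ω))
              + mx μ Y G X (X ω)) ∂μ)
      = ∫ ω, (qx μ G X (X ω) / qhat (X ω) - 1) * (mx μ Y G X (X ω) - mhat (X ω)) ∂μ
    ∧ (((∀ x, qhat x = qx μ G X x) ∨ (∀ x, mhat x = mx μ Y G X x)) →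
        (∫ ω,
          ((if G ω then (1:ℝ) else 0) / qhat (X ω)) * (Y ω - mhat (X ω)) + mhat (X ω)
            - (((if G ω then (1:ℝ) else 0) / qx μ G X (X ω)) * (Y ω - mx μ Y G X (X ω))
                + mx μ Y G X (X ω)) ∂μ) = 0) :=
  double_robustness_decomposition_general μ Y G X hG hX hXfin hYint ε hε qhat mhat hqhat
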